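/- Let L_1(x) = I_{H_1} + Σ_{j=1}^g A_j x_j and L_2(x) = I_{H_2} + Σ_{j=1}^g B_j x_j be monic linear operator pencils with bounded self-adjoint coefficients on separable real Hilbert spaces H_1, H_2. Then D_{ʰL_1}(n) = D_{ʰL_2}(n) for all n ∈ ℕ if and only if for every n ∈ ℕ and all real n×n matrices Y, X_1, …, X_g (not necessarily symmetric), the operator norm of the bounded operator on H_1^n with (i,k) block Y_{ik} I_{H_1} + Σ_{j=1}^g (X_j)_{ik} A_j equals the operator norm of the bounded operator on H_2^n with (i,k) block Y_{ik} I_{H_2} + Σ_{j=1}^g (X_j)_{ik} B_j (i.e. the unital map A_j ↦ B_j is well defined and completely isometric). -/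

import Mathlib

open scoped RealInnerProductSpace

noncomputable section

variable {E H K : Type*}

/-- A bounded operator on a real inner product space is symmetric (self-adjoint). -/
def OpIsSymm [NormedAddCommGroup E] [InnerProductSpace ℝ E] (T : E →L[ℝ] E) : Prop :=
  ∀ u v : E, ⟪T u, v⟫ = ⟪u, T v⟫

/-- A bounded operator on a real inner product space is positive semidefinite. -/
def OpIsPos [NormedAddCommGroup E] [InnerProductSpace ℝ E] (T : E →L[ℝ] E) : Prop :=
  OpIsSymm T ∧ ∀ v : E, 0 ≤ ⟪T v, v⟫

/-- A bounded operator is positive definite: `T - ε • id` is positive semidefinite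
for some `ε > 0`. -/
def OpIsPosDef [NormedAddCommGroup E] [InnerProductSpace ℝ E] (T : E →L[ℝ] E) : Prop :=
  ∃ ε : ℝ, 0 < ε ∧ OpIsPos (T - ε • ContinuousLinearMap.id ℝ E)

/-- The block operator on the Hilbert direct sum `H^n` whose `(i,k)` block is `c i k`. -/
def blockOp [NormedAddCommGroup H] [InnerProductSpace ℝ H] {n : ℕ}
    (c : Fin n → Fin n → (H →L[ℝ] H)) :
    (PiLp 2 fun _ : Fin n => H) →L[ℝ] (PiLp 2 fun _ : Fin n => H) :=
  (((PiLp.continuousLinearEquiv 2 ℝ (fun _ : Fin n => H)).symm.toContinuousLinearMap.comp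
    (ContinuousLinearMap.pi fun i : Fin n =>
      ∑ k : Fin n, (c i k).comp (ContinuousLinearMap.proj k))).comp
    (PiLp.continuousLinearEquiv 2 ℝ (fun _ : Fin n => H)).toContinuousLinearMap)

/-- Evaluation of the homogeneous linear pencil `I_H x₀ + Σ_j A_j x_j` at a tuple of
`n × n` matrices: the operator on `H^n` with `(i,k)` block
`(X₀)_{ik} I_H + Σ_j (X_j)_{ik} A_j`. -/
def hEval [NormedAddCommGroup H] [InnerProductSpace ℝ H] {g n : ℕ}
    (A : Fin g → (H →L[ℝ] H)) (X0 : Matrix (Fin n) (Fin n) ℝ)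
    (X : Fin g → Matrix (Fin n) (Fin n) ℝ) :
    (PiLp 2 fun _ : Fin n => H) →L[ℝ] (PiLp 2 fun _ : Fin n => H) :=
  blockOp fun i k => X0 i k • (1 : H →L[ℝ] H) + ∑ j, X j i k • A j

/-- Evaluation of the monic linear pencil `I_H + Σ_j A_j x_j` at a tuple of
`n × n` matrices. -/
def monicEval [NormedAddCommGroup H] [InnerProductSpace ℝ H] {g n : ℕ}
    (A : Fin g → (H →L[ℝ] H)) (X : Fin g → Matrix (Fin n) (Fin n) ℝ) :
    (PiLp 2 fun _ : Fin n => H) →L[ℝ] (PiLp 2 fun _ : Fin n => H) :=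
  hEval A 1 X

/-- Positivity of the evaluation `L(X) = A₀ ⊗ I_K + Σ_j A_j ⊗ X_j` of a linear operator
pencil at a tuple of bounded operators on a Hilbert space `K`. -/
def operPencilPos [NormedAddCommGroup H] [InnerProductSpace ℝ H]
    [NormedAddCommGroup K] [InnerProductSpace ℝ K] {g : ℕ}
    (A0 : H →L[ℝ] H) (A : Fin g → (H →L[ℝ] H)) (X : Fin g → (K →L[ℝ] K)) : Prop :=
  ∀ (m : ℕ) (h : Fin m → H) (u : Fin m → K),
    0 ≤ ∑ i, ∑ l,
      (⟪A0 (h i), h l⟫ * ⟪u i, u l⟫ + ∑ j, ⟪A j (h i), h l⟫ * ⟪X j (u i), u l⟫)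

/-- A bundled separable real Hilbert space. -/
structure SepHilbert where
  carrier : Type
  [nacg : NormedAddCommGroup carrier]
  [ips : InnerProductSpace ℝ carrier]
  [cs : CompleteSpace carrier]
  [sep : TopologicalSpace.SeparableSpace carrier]

attribute [instance] SepHilbert.nacg SepHilbert.ips SepHilbert.cs SepHilbert.sep

/-!
The norm of `T = ʰL(Y, X)` is at most `c` exactly when the dilation `[[c, T], [Tᵀ, c]]`, which is
`ʰL([[c, Y], [Yᵀ, c]], [[0, X], [Xᵀ, 0]])`, is positive semidefinite; so equal homogeneous
spectrahedra force equal norms at every level. Conversely, a symmetric `T` with `‖T‖ ≤ c` is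
positive semidefinite exactly when `‖c - T‖ ≤ c`, and `c - ʰL(X₀, X) = ʰL(c - X₀, -X)`; taking
`c = ‖ʰL_A(X₀, X)‖ = ‖ʰL_B(X₀, X)‖` transfers positivity between the two pencils.
-/

section Operator

variable {E F : Type*} [NormedAddCommGroup E] [InnerProductSpace ℝ E]
  [NormedAddCommGroup F] [InnerProductSpace ℝ F]

lemma opNorm_le_iff_two_inner_le {T : E →L[ℝ] F} {c : ℝ} (hc : 0 ≤ c) :
    ‖T‖ ≤ c ↔ ∀ u w, 2 * ⟪T w, u⟫ ≤ c * (‖u‖ ^ 2 + ‖w‖ ^ 2) := by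
  refine ⟨fun hT u w => ?_, fun h => ContinuousLinearMap.opNorm_le_of_re_inner_le hc
    fun x y hx hy => by
      have := h y x
      rw [hx, hy] at this
      simp only [RCLike.re_to_real]
      linarith⟩
  calc 2 * ⟪T w, u⟫ ≤ 2 * (c * ‖w‖ * ‖u‖) := by
        gcongr
        exact (real_inner_le_norm _ _).trans (by gcongr; exact T.le_of_opNorm_le hT w)
    _ ≤ c * (‖u‖ ^ 2 + ‖w‖ ^ 2) := by nlinarith [sq_nonneg (‖u‖ - ‖w‖)]

lemma opNorm_le_of_abs_inner_self_le {T : E →L[ℝ] E} (hT : OpIsSymm T) {c : ℝ} (hc : 0 ≤ c)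
    (h : ∀ v, |⟪T v, v⟫| ≤ c * ‖v‖ ^ 2) : ‖T‖ ≤ c := by
  rw [T.norm_eq_iSup_rayleighQuotient hT]
  refine ciSup_le fun v => ?_
  rcases eq_or_ne v 0 with rfl | hv
  · simpa using hc
  · rw [ContinuousLinearMap.rayleighQuotient, ContinuousLinearMap.reApplyInnerSelf_apply,
      RCLike.re_to_real, abs_div, abs_sq, div_le_iff₀ (by positivity)]
    exact h v

lemma opIsPos_iff_opNorm_smul_one_sub_le {T : E →L[ℝ] E} (hT : OpIsSymm T) {c : ℝ}
    (hTc : ‖T‖ ≤ c) : OpIsPos T ↔ ‖c • 1 - T‖ ≤ c := by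
  have hc : 0 ≤ c := (norm_nonneg T).trans hTc
  have inner_shift (v : E) : ⟪(c • 1 - T) v, v⟫ = c * ‖v‖ ^ 2 - ⟪T v, v⟫ := by
    simp [inner_sub_left, real_inner_smul_left]
  have inner_le (S : E →L[ℝ] E) (v : E) : ⟪S v, v⟫ ≤ ‖S‖ * ‖v‖ ^ 2 :=
    (real_inner_le_norm _ _).trans (by rw [sq, ← mul_assoc]; gcongr; exact S.le_opNorm v)
  refine ⟨fun ⟨_, hpos⟩ => opNorm_le_of_abs_inner_self_le ?_ hc fun v => ?_,
    fun h => ⟨hT, fun v => ?_⟩⟩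
  · intro u v
    simp [inner_sub_left, inner_sub_right, real_inner_smul_left, real_inner_smul_right, hT u v]
  · rw [inner_shift, abs_le]
    constructor <;> nlinarith [hpos v, inner_le T v, sq_nonneg ‖v‖]
  · nlinarith [inner_shift v, inner_le (c • 1 - T) v, sq_nonneg ‖v‖]

end Operator

section Pencil

open scoped Matrix

variable {H : Type*} [NormedAddCommGroup H] [InnerProductSpace ℝ H] {g : ℕ}

lemma blockOp_apply {n : ℕ} (c : Fin n → Fin n → (H →L[ℝ] H))
    (v : PiLp 2 fun _ : Fin n => H) (i : Fin n) :
    blockOp c v i = ∑ k, c i k (v k) := by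
  simp [blockOp, ContinuousLinearMap.proj]

lemma blockOp_sub {n : ℕ} (c d : Fin n → Fin n → (H →L[ℝ] H)) :
    blockOp (c - d) = blockOp c - blockOp d := by
  ext v i
  simp [blockOp_apply, Finset.sum_sub_distrib]

lemma hEval_sub {n : ℕ} (A : Fin g → (H →L[ℝ] H)) (X0 Y0 : Matrix (Fin n) (Fin n) ℝ)
    (X Y : Fin g → Matrix (Fin n) (Fin n) ℝ) :
    hEval A (X0 - Y0) (X - Y) = hEval A X0 X - hEval A Y0 Y := by
  rw [hEval, hEval, hEval, ← blockOp_sub]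
  congr 1
  ext1 i; ext1 k
  simp only [Pi.sub_apply, Matrix.sub_apply, sub_smul, Finset.sum_sub_distrib]
  abel

lemma hEval_smul_one {n : ℕ} (A : Fin g → (H →L[ℝ] H)) (c : ℝ) :
    hEval A (c • (1 : Matrix (Fin n) (Fin n) ℝ)) 0 = c • 1 := by
  ext v i
  simp only [hEval, blockOp_apply, Pi.zero_apply, Matrix.zero_apply, zero_smul,
    Finset.sum_const_zero, add_zero, Matrix.smul_apply, Matrix.one_apply, smul_eq_mul, mul_ite,
    mul_one, mul_zero, ite_smul, zero_smul]
  rw [Finset.sum_eq_single i (fun k _ hk => by simp [Ne.symm hk]) (by simp)]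
  simp

def pencilForm {ι : Type*} [Fintype ι] (A : Fin g → (H →L[ℝ] H)) (X0 : Matrix ι ι ℝ)
    (X : Fin g → Matrix ι ι ℝ) (v w : ι → H) : ℝ :=
  ∑ i, ∑ k, (X0 i k * ⟪v k, w i⟫ + ∑ j, X j i k * ⟪A j (v k), w i⟫)

lemma inner_hEval {n : ℕ} (A : Fin g → (H →L[ℝ] H)) (X0 : Matrix (Fin n) (Fin n) ℝ)
    (X : Fin g → Matrix (Fin n) (Fin n) ℝ) (v w : PiLp 2 fun _ : Fin n => H) :
    ⟪hEval A X0 X v, w⟫ = pencilForm A X0 X v w := by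
  simp [hEval, pencilForm, PiLp.inner_apply, blockOp_apply, sum_inner, inner_add_left,
    real_inner_smul_left]

lemma pencilForm_transpose {ι : Type*} [Fintype ι] {A : Fin g → (H →L[ℝ] H)}
    (hA : ∀ j, OpIsSymm (A j)) (X0 : Matrix ι ι ℝ) (X : Fin g → Matrix ι ι ℝ) (v w : ι → H) :
    pencilForm A X0ᵀ (fun j => (X j)ᵀ) v w = pencilForm A X0 X w v := by
  rw [pencilForm, pencilForm, Finset.sum_comm]
  simp only [Matrix.transpose_apply, hA _ (v _), real_inner_comm (v _)]

lemma hEval_isSymm {n : ℕ} {A : Fin g → (H →L[ℝ] H)} (hA : ∀ j, OpIsSymm (A j))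
    {X0 : Matrix (Fin n) (Fin n) ℝ} {X : Fin g → Matrix (Fin n) (Fin n) ℝ}
    (hX0 : X0.IsSymm) (hX : ∀ j, (X j).IsSymm) :
    OpIsSymm (hEval A X0 X) := by
  intro v w
  rw [← real_inner_comm v, inner_hEval, inner_hEval, ← pencilForm_transpose hA, hX0.eq]
  simp only [(hX _).eq]

def symmDilation {n : ℕ} (c : ℝ) (Y : Matrix (Fin n) (Fin n) ℝ) :
    Matrix (Fin (n + n)) (Fin (n + n)) ℝ :=
  Matrix.reindex finSumFinEquiv finSumFinEquiv (Matrix.fromBlocks (c • 1) Y Yᵀ (c • 1))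

lemma symmDilation_isSymm {n : ℕ} (c : ℝ) (Y : Matrix (Fin n) (Fin n) ℝ) :
    (symmDilation c Y).IsSymm := by
  have hc : (c • 1 : Matrix (Fin n) (Fin n) ℝ).IsSymm := (Matrix.isSymm_one).smul c
  exact (Matrix.IsSymm.fromBlocks hc rfl hc).submatrix _

lemma pencilForm_symmDilation {n : ℕ} {A : Fin g → (H →L[ℝ] H)} (hA : ∀ j, OpIsSymm (A j))
    (c : ℝ) (Y : Matrix (Fin n) (Fin n) ℝ) (X : Fin g → Matrix (Fin n) (Fin n) ℝ)
    (u w : Fin n → H) :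
    pencilForm A (symmDilation c Y) (fun j => symmDilation 0 (X j)) (Fin.append u w)
        (Fin.append u w) =
      c * ∑ i, ‖u i‖ ^ 2 + c * ∑ i, ‖w i‖ ^ 2 + 2 * pencilForm A Y X w u := by
  have diag (v : Fin n → H) :
      ∑ i, ∑ k, (c * if i = k then 1 else 0) * ⟪v k, v i⟫ = c * ∑ i, ‖v i‖ ^ 2 := by
    simp [Finset.mul_sum]
  have off_diag := pencilForm_transpose hA Y X u w
  simp only [pencilForm] at off_diag ⊢
  simp only [symmDilation, Fin.sum_univ_add, Fin.append_left, Fin.append_right,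
    Matrix.reindex_apply, Matrix.submatrix_apply, finSumFinEquiv_symm_apply_castAdd,
    finSumFinEquiv_symm_apply_natAdd, Matrix.fromBlocks_apply₁₁, Matrix.fromBlocks_apply₁₂,
    Matrix.fromBlocks_apply₂₁, Matrix.fromBlocks_apply₂₂, zero_mul,
    Finset.sum_const_zero, add_zero, Matrix.smul_apply, Matrix.one_apply, smul_eq_mul]
  rw [Finset.sum_add_distrib, Finset.sum_add_distrib, diag, diag, off_diag]
  ring

lemma opIsPos_hEval_symmDilation_iff {n : ℕ} {A : Fin g → (H →L[ℝ] H)}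
    (hA : ∀ j, OpIsSymm (A j)) (Y : Matrix (Fin n) (Fin n) ℝ)
    (X : Fin g → Matrix (Fin n) (Fin n) ℝ) {c : ℝ} (hc : 0 ≤ c) :
    OpIsPos (hEval A (symmDilation c Y) fun j => symmDilation 0 (X j)) ↔ ‖hEval A Y X‖ ≤ c := by
  set join : (PiLp 2 fun _ : Fin n => H) → (PiLp 2 fun _ : Fin n => H) →
      PiLp 2 fun _ : Fin (n + n) => H := fun u w => WithLp.toLp 2 (Fin.append u w)
  have join_surjective (v : PiLp 2 fun _ : Fin (n + n) => H) : ∃ u w, v = join u w :=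
    ⟨WithLp.toLp 2 fun i => v (Fin.castAdd n i), WithLp.toLp 2 fun i => v (Fin.natAdd n i),
      by simp only [join, Fin.append_castAdd_natAdd, WithLp.toLp_ofLp]⟩
  have inner_join (u w : PiLp 2 fun _ : Fin n => H) :
      ⟪hEval A (symmDilation c Y) (fun j => symmDilation 0 (X j)) (join u w), join u w⟫ =
        c * ‖u‖ ^ 2 + c * ‖w‖ ^ 2 + 2 * ⟪hEval A Y X w, u⟫ := by
    rw [inner_hEval, inner_hEval, PiLp.norm_sq_eq_of_L2, PiLp.norm_sq_eq_of_L2]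
    exact pencilForm_symmDilation hA c Y X u w
  rw [opNorm_le_iff_two_inner_le hc]
  constructor
  · rintro ⟨-, hpos⟩ u w
    have := inner_join (-u) w ▸ hpos (join (-u) w)
    rw [norm_neg, inner_neg_right] at this
    linarith
  · refine fun h => ⟨hEval_isSymm hA (symmDilation_isSymm c Y)
      fun j => symmDilation_isSymm 0 (X j), fun v => ?_⟩
    obtain ⟨u, w, rfl⟩ := join_surjective v
    have := h (-u) w
    rw [norm_neg, inner_neg_right] at this
    linarith [inner_join u w]

end Pencil

theorem homogeneous_equality_iff_completely_isometric_general
    {g : ℕ} {H1 H2 : Type}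
    [NormedAddCommGroup H1] [InnerProductSpace ℝ H1]
    [NormedAddCommGroup H2] [InnerProductSpace ℝ H2]
    (A : Fin g → (H1 →L[ℝ] H1)) (B : Fin g → (H2 →L[ℝ] H2))
    (hA : ∀ j, OpIsSymm (A j)) (hB : ∀ j, OpIsSymm (B j)) :
    (∀ (n : ℕ) (X0 : Matrix (Fin n) (Fin n) ℝ) (X : Fin g → Matrix (Fin n) (Fin n) ℝ),
        X0.IsSymm → (∀ j, (X j).IsSymm) →
        (OpIsPos (hEval A X0 X) ↔ OpIsPos (hEval B X0 X))) ↔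
    (∀ (n : ℕ) (Y : Matrix (Fin n) (Fin n) ℝ) (X : Fin g → Matrix (Fin n) (Fin n) ℝ),
        ‖hEval A Y X‖ = ‖hEval B Y X‖) := by
  constructor
  · intro hpos n Y X
    have norm_le_iff (c : ℝ) (hc : 0 ≤ c) : ‖hEval A Y X‖ ≤ c ↔ ‖hEval B Y X‖ ≤ c := by
      rw [← opIsPos_hEval_symmDilation_iff hA Y X hc, ← opIsPos_hEval_symmDilation_iff hB Y X hc]
      exact hpos _ _ _ (symmDilation_isSymm c Y) fun j => symmDilation_isSymm 0 (X j)
    exact le_antisymm ((norm_le_iff _ (norm_nonneg (hEval B Y X))).2 le_rfl)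
      ((norm_le_iff _ (norm_nonneg (hEval A Y X))).1 le_rfl)
  · intro hnorm n X0 X hX0 hX
    set c := ‖hEval A X0 X‖
    have shift {K : Type} [NormedAddCommGroup K] [InnerProductSpace ℝ K]
        (C : Fin g → (K →L[ℝ] K)) : c • 1 - hEval C X0 X = hEval C (c • 1 - X0) (0 - X) := by
      rw [hEval_sub, hEval_smul_one]
    rw [opIsPos_iff_opNorm_smul_one_sub_le (hEval_isSymm hA hX0 hX) le_rfl,
      opIsPos_iff_opNorm_smul_one_sub_le (hEval_isSymm hB hX0 hX) (hnorm n X0 X).ge,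
      shift, shift, hnorm]

/-- the homogenized free spectrahedra of two monic pencils coincide at
all levels iff the unital map `A_j ↦ B_j` is (well defined and) completely isometric,
i.e. preserves the operator norms of all block operators. -/
theorem homogeneous_equality_iff_completely_isometric
    {g : ℕ} {H1 H2 : Type}
    [NormedAddCommGroup H1] [InnerProductSpace ℝ H1] [CompleteSpace H1]
    [TopologicalSpace.SeparableSpace H1]
    [NormedAddCommGroup H2] [InnerProductSpace ℝ H2] [CompleteSpace H2]
    [TopologicalSpace.SeparableSpace H2]
    (A : Fin g → (H1 →L[ℝ] H1)) (B : Fin g → (H2 →L[ℝ] H2))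
    (hA : ∀ j, OpIsSymm (A j)) (hB : ∀ j, OpIsSymm (B j)) :
    (∀ (n : ℕ) (X0 : Matrix (Fin n) (Fin n) ℝ) (X : Fin g → Matrix (Fin n) (Fin n) ℝ),
        X0.IsSymm → (∀ j, (X j).IsSymm) →
        (OpIsPos (hEval A X0 X) ↔ OpIsPos (hEval B X0 X))) ↔
    (∀ (n : ℕ) (Y : Matrix (Fin n) (Fin n) ℝ) (X : Fin g → Matrix (Fin n) (Fin n) ℝ),
        ‖hEval A Y X‖ = ‖hEval B Y X‖) :=
  homogeneous_equality_iff_completely_isometric_general A B hA hB
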